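/- Let D be a connected locally semicomplete digraph that is not strong. Then its strong components can be uniquely ordered C₁, C₂, …, C_ℓ such that there is no arc from V(C_j) to V(C_i) for j > i, and V(C_i) dominates V(C_{i+1}) for each i ∈ [ℓ−1] (i.e., every vertex of C_i has an arc to every vertex of C_{i+1}). -/

import Mathlib

/-!
In a connected locally semicomplete digraph reachability is total: an in-neighbour of the end
of a path is comparable with its start (semicompleteness of in-neighbourhoods, by induction on
the path), dually for out-neighbours, and comparability then spreads along any undirected walk.
So the strong components form a chain under reachability, and every acyclic ordering is the
rank function of this chain, which makes it unique. If `C_{i+1}` follows `C_i`, the first arc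
leaving `C_i` on a path to `C_{i+1}` must enter `C_{i+1}`; local semicompleteness then spreads
this single arc to all of `C_i × C_{i+1}`.
-/

/-- `A` is a locally semicomplete digraph: the out-neighbourhood and the
in-neighbourhood of each vertex induce semicomplete digraphs. -/
def LocallySemicomplete {V : Type*} (A : V → V → Prop) : Prop :=
  ∀ x u v : V, u ≠ v →
    (A x u → A x v → A u v ∨ A v u) ∧ (A u x → A v x → A u v ∨ A v u)

/-- The digraph `A` is connected (its underlying graph is connected). -/
def DigraphConnected {V : Type*} (A : V → V → Prop) : Prop :=
  ∀ u v : V, Relation.ReflTransGen (fun a b => A a b ∨ A b a) u v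

/-- The digraph `A` is strongly connected. -/
def DigraphStrong {V : Type*} (A : V → V → Prop) : Prop :=
  ∀ u v : V, Relation.ReflTransGen A u v

/-- `comp : V → Fin ℓ` is the acyclic ordering of the strong components of `A`:
its fibres are the strong components and no arc goes backwards. -/
def IsAcyclicOrdering {V : Type*} (A : V → V → Prop) {ℓ : ℕ} (comp : V → Fin ℓ) : Prop :=
  Function.Surjective comp ∧
    (∀ u v : V, comp u = comp v ↔
      (Relation.ReflTransGen A u v ∧ Relation.ReflTransGen A v u)) ∧
    (∀ u v : V, A u v → comp u ≤ comp v)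

/-- `l` lists the vertices of an `(S,T)`-path for the relation `R`: the first vertex is
in `S`, the last in `T`, and the internal vertices avoid `S ∪ T`. -/
def IsSTPathList {V : Type*} (R : V → V → Prop) (S T : Set V) (l : List V) : Prop :=
  l.Chain' R ∧ l.Nodup ∧
    (∃ a ∈ S, l.head? = some a) ∧ (∃ b ∈ T, l.getLast? = some b) ∧
    ∀ v ∈ (l.drop 1).dropLast, v ∉ S ∪ T

/-- The length `d(S,T)` of a shortest directed `(S,T)`-path in the digraph `A`. -/
noncomputable def distST {V : Type*} (A : V → V → Prop) (S T : Set V) : ℕ :=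
  sInf {m : ℕ | ∃ l : List V, IsSTPathList A S T l ∧ l.length = m + 1}

/-- The number of forward arcs of the oriented path listed by `l`. -/
noncomputable def listForward {V : Type*} (A : V → V → Prop) (l : List V) : ℕ :=
  (l.zip l.tail).countP fun p => @decide (A p.1 p.2) (Classical.propDecidable _)

open Relation Function

theorem exists_surjective_fin_le_iff {α : Type*} [Finite α] (r : α → α → Prop) [IsPreorder α r]
    (htot : ∀ a b, r a b ∨ r b a) :
    ∃ (ℓ : ℕ) (f : α → Fin ℓ), Surjective f ∧ ∀ a b, f a ≤ f b ↔ r a b := by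
  classical
  let _ : Preorder α := { le := r, le_refl := refl_of r, le_trans := fun _ _ _ => trans_of r }
  have : @Std.Total α (· ≤ ·) := ⟨htot⟩
  have : Finite (Antisymmetrization α (· ≤ ·)) := Quotient.finite _
  let _ : Fintype (Antisymmetrization α (· ≤ ·)) := Fintype.ofFinite _
  let e := Fintype.orderIsoFinOfCardEq (Antisymmetrization α (· ≤ ·)) rfl
  refine ⟨_, fun a => e.symm (toAntisymmetrization (· ≤ ·) a), ?_, fun a b => ?_⟩
  · exact e.symm.surjective.comp Quotient.mk_surjective
  · exact e.symm.le_iff_le.trans toAntisymmetrization_le_toAntisymmetrization_iff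

theorem Fin.eq_and_val_eq_of_le_iff {α : Type*} {m n : ℕ} {f : α → Fin m} {g : α → Fin n}
    (hf : Surjective f) (hg : Surjective g) (hfg : ∀ a b, f a ≤ f b ↔ g a ≤ g b) :
    m = n ∧ ∀ a, (f a : ℕ) = g a := by
  have hfg_lt : ∀ a b, f a < f b ↔ g a < g b := fun a b => by
    simp only [← not_le, hfg]
  let e : Fin m → Fin n := fun i => g (surjInv hf i)
  have he : ∀ a, e (f a) = g a := fun a => by
    have := surjInv_eq hf (f a)
    exact le_antisymm ((hfg _ _).1 this.le) ((hfg _ _).1 this.ge)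
  have he_mono : StrictMono e := hf.forall₂.2 fun a b hab => by
    rw [he, he]; exact (hfg_lt a b).1 hab
  have he_surj : Surjective e := fun j =>
    let ⟨a, ha⟩ := hg j; ⟨f a, (he a).trans ha⟩
  let iso := he_mono.orderIsoOfSurjective e he_surj
  refine ⟨Fin.equiv_iff_eq.1 ⟨iso.toEquiv⟩, fun a => ?_⟩
  rw [← he, ← Fin.coe_orderIso_apply iso, StrictMono.coe_orderIsoOfSurjective]

section AcyclicOrdering

variable {V : Type*} {A : V → V → Prop} {ℓ : ℕ} {comp : V → Fin ℓ}

theorem isAcyclicOrdering_of_le_iff (hsurj : Surjective comp)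
    (hle : ∀ u v, comp u ≤ comp v ↔ ReflTransGen A u v) : IsAcyclicOrdering A comp :=
  ⟨hsurj, fun u v => by rw [le_antisymm_iff, hle, hle],
    fun u v huv => (hle u v).2 (.single huv)⟩

theorem IsAcyclicOrdering.le_of_reflTransGen (h : IsAcyclicOrdering A comp) {u v : V}
    (huv : ReflTransGen A u v) : comp u ≤ comp v := by
  induction huv with
  | refl => exact le_rfl
  | tail _ hab ih => exact ih.trans (h.2.2 _ _ hab)

theorem IsAcyclicOrdering.le_iff (h : IsAcyclicOrdering A comp)
    (htot : ∀ u v, ReflTransGen A u v ∨ ReflTransGen A v u) (u v : V) :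
    comp u ≤ comp v ↔ ReflTransGen A u v := by
  refine ⟨fun hle => (htot u v).elim id fun hvu => ?_, h.le_of_reflTransGen⟩
  exact ((h.2.1 u v).1 (le_antisymm hle (h.le_of_reflTransGen hvu))).1

end AcyclicOrdering

theorem exists_adj_leaving_of_reflTransGen {V : Type*} {A : V → V → Prop} {u v : V}
    (huv : ReflTransGen A u v) (hvu : ¬ ReflTransGen A v u) :
    ∃ a b, A a b ∧ ReflTransGen A u a ∧ ReflTransGen A a u ∧
      ReflTransGen A b v ∧ ¬ ReflTransGen A b u := by
  induction huv using ReflTransGen.head_induction_on with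
  | refl => exact absurd .refl hvu
  | @head u z huz hzv ih =>
    by_cases hzu : ReflTransGen A z u
    · obtain ⟨a, b, hab, hza, haz, hbv, hbz⟩ := ih fun hvz => hvu (hvz.trans hzu)
      exact ⟨a, b, hab, .head huz hza, haz.trans hzu, hbv, fun hbu => hbz (hbu.tail huz)⟩
    · exact ⟨u, z, huz, .refl, .refl, hzv, hzu⟩

namespace LocallySemicomplete

variable {V : Type*} {A : V → V → Prop}

theorem swap (hls : LocallySemicomplete A) : LocallySemicomplete (swap A) :=
  fun x u v huv => ⟨fun hu hv => ((hls x u v huv).2 hu hv).symm,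
    fun hu hv => ((hls x u v huv).1 hu hv).symm⟩

theorem reflTransGen_total_of_adj_end (hls : LocallySemicomplete A) {u v w : V}
    (hvw : ReflTransGen A v w) (huw : A u w) : ReflTransGen A u v ∨ ReflTransGen A v u := by
  induction hvw generalizing u with
  | refl => exact .inl (.single huw)
  | @tail y w hvy hyw ih =>
    by_cases huy : u = y
    · exact .inr (huy ▸ hvy)
    · rcases (hls w u y huy).2 huw hyw with h | h
      · exact ih h
      · exact .inr (hvy.tail h)

theorem reflTransGen_total_of_adj_start (hls : LocallySemicomplete A) {u v w : V}
    (hwv : ReflTransGen A w v) (hwu : A w u) : ReflTransGen A u v ∨ ReflTransGen A v u := by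
  simpa only [reflTransGen_swap, or_comm] using
    hls.swap.reflTransGen_total_of_adj_end (reflTransGen_swap.2 hwv) hwu

theorem reflTransGen_total (hls : LocallySemicomplete A) (hconn : DigraphConnected A)
    (u v : V) : ReflTransGen A u v ∨ ReflTransGen A v u := by
  induction hconn u v with
  | refl => exact .inl .refl
  | @tail y w _ hyw ih =>
    rcases hyw with h | h <;> rcases ih with h' | h'
    · exact .inl (h'.tail h)
    · exact (hls.reflTransGen_total_of_adj_start h' h).symm
    · exact (hls.reflTransGen_total_of_adj_end h' h).symm
    · exact .inr (.head h h')

theorem adj_of_adj_of_reflTransGen (hls : LocallySemicomplete A) {x b w : V} (hxb : A x b)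
    (hwb : ReflTransGen A w b) (hwx : ¬ ReflTransGen A w x) : A x w := by
  induction hwb using ReflTransGen.head_induction_on with
  | refl => exact hxb
  | @head w z hwz _ ih =>
    have hxz : A x z := ih fun hzx => hwx (hzx.head hwz)
    have hxw : x ≠ w := by rintro rfl; exact hwx .refl
    exact ((hls z x w hxw).2 hxz hwz).resolve_right fun hwx' => hwx (.single hwx')

theorem adj_of_adj_of_reflTransGen' (hls : LocallySemicomplete A) {x b w : V} (hxb : A x b)
    (hxw : ReflTransGen A x w) (hbw : ¬ ReflTransGen A b w) : A w b :=
  hls.swap.adj_of_adj_of_reflTransGen hxb (reflTransGen_swap.2 hxw)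
    fun h => hbw (reflTransGen_swap.1 h)

theorem adj_of_adj_between_components (hls : LocallySemicomplete A) {x b w v : V}
    (hxb : A x b) (hbx : ¬ ReflTransGen A b x) (hxw : ReflTransGen A x w)
    (hwx : ReflTransGen A w x) (hbv : ReflTransGen A b v) (hvb : ReflTransGen A v b) :
    A w v :=
  have hxv : A x v := hls.adj_of_adj_of_reflTransGen hxb hvb fun hvx => hbx (hbv.trans hvx)
  hls.adj_of_adj_of_reflTransGen' hxv hxw fun hvw => hbx (hbv.trans (hvw.trans hwx))

theorem adj_of_val_add_one_eq (hls : LocallySemicomplete A) {ℓ : ℕ} {comp : V → Fin ℓ}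
    (hle : ∀ u v, comp u ≤ comp v ↔ ReflTransGen A u v) {u v : V}
    (hsucc : (comp u : ℕ) + 1 = comp v) : A u v := by
  have hlt : comp u < comp v := Fin.lt_def.2 (by omega)
  obtain ⟨a, b, hab, hua, hau, hbv, hbu⟩ := exists_adj_leaving_of_reflTransGen
    ((hle u v).1 hlt.le) fun hvu => hlt.not_ge ((hle v u).2 hvu)
  have hub : comp u < comp b :=
    lt_of_le_not_ge ((hle u b).2 (hua.tail hab)) fun hbu' => hbu ((hle b u).1 hbu')
  have hvb : comp v ≤ comp b := Fin.le_def.2 (by omega)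
  exact hls.adj_of_adj_between_components hab (fun hba => hbu (hba.trans hau)) hau hua hbv
    ((hle v b).1 hvb)

end LocallySemicomplete

theorem stmt18_general {V : Type*} [Fintype V] (A : V → V → Prop)
    (hls : LocallySemicomplete A) (hconn : DigraphConnected A) :
    ∃ (ℓ : ℕ) (comp : V → Fin ℓ), IsAcyclicOrdering A comp ∧
      (∀ u v : V, (comp u : ℕ) + 1 = (comp v : ℕ) → A u v) ∧
      (∀ (ℓ' : ℕ) (comp' : V → Fin ℓ'), IsAcyclicOrdering A comp' → ℓ' = ℓ) ∧
      (∀ comp' : V → Fin ℓ, IsAcyclicOrdering A comp' → comp' = comp) := by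
  have htot := hls.reflTransGen_total hconn
  obtain ⟨ℓ, comp, hsurj, hle⟩ := exists_surjective_fin_le_iff (ReflTransGen A) htot
  have agrees {ℓ' : ℕ} {comp' : V → Fin ℓ'} (h' : IsAcyclicOrdering A comp') :
      ℓ' = ℓ ∧ ∀ v, (comp' v : ℕ) = comp v :=
    Fin.eq_and_val_eq_of_le_iff h'.1 hsurj fun u v => (h'.le_iff htot u v).trans (hle u v).symm
  refine ⟨ℓ, comp, isAcyclicOrdering_of_le_iff hsurj hle,
    fun u v => hls.adj_of_val_add_one_eq hle, fun ℓ' comp' h' => (agrees h').1,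
    fun comp' h' => funext fun v => Fin.ext ((agrees h').2 v)⟩

/-- the strong components of a connected non-strong locally semicomplete
digraph admit a unique acyclic ordering `C₁, …, C_ℓ` (no arc from `C_j` to `C_i` for
`j > i`) in which moreover each `C_i` dominates `C_{i+1}`. -/
theorem stmt18 {V : Type*} [Fintype V] (A : V → V → Prop)
    (hls : LocallySemicomplete A) (hconn : DigraphConnected A)
    (hns : ¬ DigraphStrong A) :
    ∃ (ℓ : ℕ) (comp : V → Fin ℓ), IsAcyclicOrdering A comp ∧
      (∀ u v : V, (comp u : ℕ) + 1 = (comp v : ℕ) → A u v) ∧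
      (∀ (ℓ' : ℕ) (comp' : V → Fin ℓ'), IsAcyclicOrdering A comp' → ℓ' = ℓ) ∧
      (∀ comp' : V → Fin ℓ, IsAcyclicOrdering A comp' → comp' = comp) :=
  stmt18_general A hls hconn
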